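/- arXiv:2407.12840 — 4 statements merged into one kernel-verified Lean document; each statement's English description precedes it below -/
import Mathlib

section
/- The effective epimorphisms in the category of profinite spaces are exactly the continuous surjections. -/
open CategoryTheory

attribute [local instance] CategoryTheory.ConcreteCategory.instFunLike

universe u

theorem profinite_effectiveEpi_iff_surjective {X Y : Profinite.{u}} (f : X ⟶ Y) :
    EffectiveEpi f ↔ Function.Surjective (f : _ → _) := by
  exact (Profinite.effectiveEpi_tfae f).out 0 2
end

section
/- In a preregular and finitary extensive category, the Grothendieck topology generated by the union of the regular coverage and the extensive coverage equals the coherent topology. -/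
open CategoryTheory

theorem regular_sup_extensive_generate_coherent {C : Type*} [Category C]
    [Preregular C] [FinitaryExtensive C] :
    (regularCoverage C ⊔ extensiveCoverage C).toGrothendieck = coherentTopology C := by
  rw [sup_comm]; exact extensive_regular_generate_coherent C
end

section
/- In a precoherent category, a sieve is a covering sieve for the coherent topology if and only if it contains a finite effective epimorphic family. -/
open CategoryTheory

theorem mem_coherentTopology_iff_hasEffectiveEpiFamily {C : Type*} [Category C]
    [Precoherent C] {X : C} (S : Sieve X) :
    S ∈ coherentTopology C X ↔
      ∃ (α : Type) (_ : Finite α) (Y : α → C) (π : (a : α) → (Y a ⟶ X)),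
        EffectiveEpiFamily Y π ∧ (∀ a : α, S.arrows (π a)) := by
  exact coherentTopology.mem_sieves_iff_hasEffectiveEpiFamily S
end

section
/- The inclusion functor Profinite → CompHaus induces an equivalence between the category of sheaves of sets for the coherent topology on Profinite and the category of sheaves of sets for the coherent topology on CompHaus (i.e., condensed sets). -/
open CategoryTheory

theorem profiniteToCompHaus_sheafPushforward_isEquivalence :
    (profiniteToCompHaus.sheafPushforwardContinuous (Type (u + 1))
      (coherentTopology Profinite.{u}) (coherentTopology CompHaus.{u})).IsEquivalence := by
  infer_instance
end
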